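/- arXiv:2502.16928 — 12 statements merged into one kernel-verified Lean document; each statement's English description precedes it below -/
import Mathlib

section
/- Let t : ℕ → ℕ and let c, m be integers with c ≥ 2 and m ≥ 2 such that t(k) < c^(k−2) for every integer k ≥ m. Then the series ∑_{k≥0} t(k)·x^k converges at x = c^(−n) for every n ≥ m, and for every integer n ≥ m one has t(n) = ⌊c^(n²) · ∑_{k≥0} t(k)·c^(−n·k)⌋ mod c^n. -/
/-!
Put `q = c ^ n`, so that the series is `S = ∑ t k * q⁻¹ ^ k`. Then
`q ^ n * S = ∑_{k ≤ n} t k * q ^ (n - k) + ∑_{k > n} t k * q ^ (n - k)`: the first sum is a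
natural number congruent to `t n` modulo `q`. By the growth bound `t k < c ^ (k - 2)` the term
with `k = n + j` of the second sum is strictly smaller than `c⁻¹ ^ j`, so that sum lies in
`[0, 1)` and is the fractional part of `q ^ n * S`.
-/

open Finset

section DigitExtraction

variable {a : ℕ → ℕ} {q n : ℕ}

lemma mul_tsum_inv_pow_eq_sum_add_tail (hq : 0 < q)
    (hs : Summable fun k => (a k : ℝ) * ((q : ℝ)⁻¹) ^ k) :
    (q : ℝ) ^ n * ∑' k, (a k : ℝ) * ((q : ℝ)⁻¹) ^ k =
      ((∑ k ∈ range (n + 1), a k * q ^ (n - k) : ℕ) : ℝ) +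
        ∑' j, (a (j + (n + 1)) : ℝ) * ((q : ℝ)⁻¹) ^ (j + 1) := by
  have hq' : (q : ℝ) ≠ 0 := by positivity
  rw [← hs.sum_add_tsum_nat_add (n + 1), mul_add, mul_sum, ← tsum_mul_left]
  push_cast
  congr 1
  · refine sum_congr rfl fun k hk => ?_
    rw [pow_sub₀ _ hq' (Nat.lt_succ_iff.mp (mem_range.mp hk)), inv_pow]
    ring
  · refine tsum_congr fun j => ?_
    rw [show j + (n + 1) = n + (j + 1) by omega, pow_add, inv_pow (q : ℝ) n]
    field_simp

lemma sum_mul_pow_sub_mod (a : ℕ → ℕ) (q n : ℕ) :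
    (∑ k ∈ range (n + 1), a k * q ^ (n - k)) % q = a n % q := by
  have hdvd : q ∣ ∑ k ∈ range n, a k * q ^ (n - k) :=
    dvd_sum fun k hk => (dvd_pow_self q (by have := mem_range.mp hk; omega)).mul_left _
  obtain ⟨b, hb⟩ := hdvd
  rw [sum_range_succ, hb, Nat.sub_self, pow_zero, mul_one, Nat.mul_add_mod]

lemma floor_pow_mul_tsum_inv_pow_emod (hq : 0 < q)
    (hs : Summable fun k => (a k : ℝ) * ((q : ℝ)⁻¹) ^ k)
    (htail : ∑' j, (a (j + (n + 1)) : ℝ) * ((q : ℝ)⁻¹) ^ (j + 1) < 1) (han : a n < q) :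
    ⌊(q : ℝ) ^ n * ∑' k, (a k : ℝ) * ((q : ℝ)⁻¹) ^ k⌋ % (q : ℤ) = a n := by
  have htail_nonneg : 0 ≤ ∑' j, (a (j + (n + 1)) : ℝ) * ((q : ℝ)⁻¹) ^ (j + 1) :=
    tsum_nonneg fun j => by positivity
  rw [mul_tsum_inv_pow_eq_sum_add_tail hq hs, Int.floor_natCast_add,
    Int.floor_eq_zero_iff.mpr ⟨htail_nonneg, htail⟩, add_zero, ← Int.natCast_mod,
    sum_mul_pow_sub_mod, Nat.mod_eq_of_lt han]

end DigitExtraction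

section GrowthBound

variable {t : ℕ → ℕ} {c n : ℕ}

lemma mul_inv_pow_lt_inv_pow_of_lt_pow (hc : 2 ≤ c) (hn : 2 ≤ n) (j : ℕ)
    (ht : t (j + (n + 1)) < c ^ (j + (n + 1) - 2)) :
    (t (j + (n + 1)) : ℝ) * (((c ^ n : ℕ) : ℝ)⁻¹) ^ (j + 1) < ((c : ℝ)⁻¹) ^ (j + 1) := by
  have key : t (j + (n + 1)) * c ^ (j + 1) < (c ^ n) ^ (j + 1) :=
    calc t (j + (n + 1)) * c ^ (j + 1) < c ^ (j + (n + 1) - 2) * c ^ (j + 1) :=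
          Nat.mul_lt_mul_of_pos_right ht (by positivity)
      _ = c ^ (2 * j + n) := by rw [← pow_add]; congr 1; omega
      _ ≤ c ^ (n * (j + 1)) := Nat.pow_le_pow_right (by omega) (by nlinarith)
      _ = (c ^ n) ^ (j + 1) := pow_mul c n (j + 1)
  have keyR : (t (j + (n + 1)) : ℝ) * (c : ℝ) ^ (j + 1) < ((c ^ n : ℕ) : ℝ) ^ (j + 1) := by
    exact_mod_cast key
  rw [inv_pow, inv_pow, ← div_eq_mul_inv, div_lt_iff₀ (by positivity), ← div_eq_inv_mul,
    lt_div_iff₀ (by positivity)]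
  exact keyR

lemma tsum_inv_pow_succ_le_one (hc : 2 ≤ c) : ∑' j : ℕ, ((c : ℝ)⁻¹) ^ (j + 1) ≤ 1 := by
  have hr0 : (0 : ℝ) ≤ (c : ℝ)⁻¹ := by positivity
  have hr : (c : ℝ)⁻¹ ≤ 1 / 2 := by
    rw [one_div]; exact inv_anti₀ two_pos (by exact_mod_cast hc)
  simp_rw [pow_succ]
  rw [tsum_mul_right, tsum_geometric_of_lt_one hr0 (by linarith), inv_mul_le_iff₀ (by linarith)]
  linarith

lemma summable_inv_pow_succ (hc : 2 ≤ c) : Summable fun j : ℕ => ((c : ℝ)⁻¹) ^ (j + 1) :=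
  (summable_nat_add_iff 1).mpr <| summable_geometric_of_lt_one (by positivity)
    (inv_lt_one_of_one_lt₀ (by exact_mod_cast hc))

lemma tsum_tail_mul_inv_pow_lt_one (hc : 2 ≤ c) (hn : 2 ≤ n)
    (ht : ∀ k, n < k → t k < c ^ (k - 2)) :
    ∑' j, (t (j + (n + 1)) : ℝ) * (((c ^ n : ℕ) : ℝ)⁻¹) ^ (j + 1) < 1 := by
  have hlt := fun j => mul_inv_pow_lt_inv_pow_of_lt_pow hc hn j (ht _ (by omega))
  have hsum : Summable fun j => (t (j + (n + 1)) : ℝ) * (((c ^ n : ℕ) : ℝ)⁻¹) ^ (j + 1) :=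
    (summable_inv_pow_succ hc).of_nonneg_of_le (fun j => by positivity) fun j => (hlt j).le
  calc _ < ∑' j : ℕ, ((c : ℝ)⁻¹) ^ (j + 1) :=
        hsum.tsum_lt_tsum (i := 0) (fun j => (hlt j).le) (hlt 0) (summable_inv_pow_succ hc)
    _ ≤ 1 := tsum_inv_pow_succ_le_one hc

lemma summable_mul_inv_pow (hc : 2 ≤ c) (hn : 2 ≤ n) (ht : ∀ k, n < k → t k < c ^ (k - 2)) :
    Summable fun k => (t k : ℝ) * (((c ^ n : ℕ) : ℝ)⁻¹) ^ k := by
  have hq : ((c ^ n : ℕ) : ℝ)⁻¹ ≤ 1 :=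
    inv_le_one_of_one_le₀ (by exact_mod_cast Nat.one_le_pow _ _ (by omega))
  refine (summable_nat_add_iff (n + 1)).mp <| (summable_inv_pow_succ hc).of_nonneg_of_le
    (fun j => by positivity) fun j => ?_
  calc (t (j + (n + 1)) : ℝ) * (((c ^ n : ℕ) : ℝ)⁻¹) ^ (j + (n + 1))
      ≤ (t (j + (n + 1)) : ℝ) * (((c ^ n : ℕ) : ℝ)⁻¹) ^ (j + 1) :=
        mul_le_mul_of_nonneg_left (pow_le_pow_of_le_one (by positivity) hq (by omega))
          (by positivity)
    _ ≤ ((c : ℝ)⁻¹) ^ (j + 1) :=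
        (mul_inv_pow_lt_inv_pow_of_lt_pow hc hn j (ht _ (by omega))).le

end GrowthBound

theorem stmt_1 (t : ℕ → ℕ) (c m : ℕ) (hc : 2 ≤ c) (hm : 2 ≤ m)
    (hbound : ∀ k : ℕ, m ≤ k → t k < c ^ (k - 2)) :
    ∀ n : ℕ, m ≤ n →
      Summable (fun k : ℕ => (t k : ℝ) * (c : ℝ) ^ (-((n * k : ℕ) : ℤ))) ∧
      (t n : ℤ) =
        ⌊(c : ℝ) ^ (n ^ 2) * ∑' k : ℕ, (t k : ℝ) * (c : ℝ) ^ (-((n * k : ℕ) : ℤ))⌋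
          % (c : ℤ) ^ n := by
  intro n hmn
  have hn : 2 ≤ n := hm.trans hmn
  have ht : ∀ k, n < k → t k < c ^ (k - 2) := fun k hk => hbound k (by omega)
  have htn : t n < c ^ n :=
    (hbound n hmn).trans_le (Nat.pow_le_pow_right (by omega) (Nat.sub_le n 2))
  have hterm (k : ℕ) : (c : ℝ) ^ (-((n * k : ℕ) : ℤ)) = (((c ^ n : ℕ) : ℝ)⁻¹) ^ k := by
    rw [zpow_neg, zpow_natCast, pow_mul, inv_pow, Nat.cast_pow]
  have hs := summable_mul_inv_pow hc hn ht
  simp only [hterm]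
  refine ⟨hs, ?_⟩
  rw [show (c : ℝ) ^ (n ^ 2) = ((c ^ n : ℕ) : ℝ) ^ n by push_cast; ring,
    show (c : ℤ) ^ n = ((c ^ n : ℕ) : ℤ) by push_cast; rfl,
    floor_pow_mul_tsum_inv_pow_emod (by positivity) hs (tsum_tail_mul_inv_pow_lt_one hc hn ht) htn]
end

section
/- Let t : ℕ → ℕ and let c be an integer with c ≥ 8 such that t(k)³ < c^k (equivalently, t(k) < c^(k/3)) for every integer k ≥ 1. Then for every integer n ≥ 1 one has t(n) = ⌊c^(n²) · ∑_{k≥0} t(k)·c^(−n·k)⌋ mod c^n. -/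
/-!
Put `b = c ^ n`, so the series is `∑ t k / b ^ k` and `c ^ (n ^ 2) = b ^ n`. Multiplying by `b ^ n`,
the terms with `k ≤ n` add up to a natural number whose last base-`b` digit is `t n < b`, while
the terms with `k = n + j`, `j ≥ 1`, are below `2⁻¹ ^ j`: from `t k ^ 3 < c ^ k` and `8 ≤ c` one gets
`(t k * 2 ^ j) ^ 3 < c ^ (n + 2 j) ≤ b ^ (3 j)`. The tail thus lies in `[0, 1)` and does not affect
the floor.
-/

open Finset

lemma mul_two_pow_lt_pow_pow {a c n j : ℕ} (hc : 8 ≤ c) (hn : 1 ≤ n) (hj : 1 ≤ j)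
    (ha : a ^ 3 < c ^ (n + j)) : a * 2 ^ j < (c ^ n) ^ j := by
  rw [← Nat.pow_lt_pow_iff_left (n := 3) (by norm_num)]
  calc (a * 2 ^ j) ^ 3 = a ^ 3 * 8 ^ j := by
        rw [mul_pow, ← pow_mul, mul_comm j 3, pow_mul]; norm_num
    _ < c ^ (n + j) * c ^ j :=
        Nat.mul_lt_mul_of_lt_of_le ha (Nat.pow_le_pow_left hc j) (by positivity)
    _ = c ^ (n + 2 * j) := by rw [← pow_add]; ring_nf
    _ ≤ c ^ (3 * (n * j)) := Nat.pow_le_pow_right (by omega) (by nlinarith)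
    _ = ((c ^ n) ^ j) ^ 3 := by rw [← pow_mul, ← pow_mul]; ring_nf

lemma div_pow_lt_one_div_two_pow {a b j : ℕ} (h : a * 2 ^ j < b ^ j) :
    (a : ℝ) / (b : ℝ) ^ j < 1 / 2 ^ j := by
  have hb : (0 : ℝ) < (b : ℝ) ^ j := by exact_mod_cast h.pos
  rw [div_lt_div_iff₀ hb (by positivity), one_mul]
  exact_mod_cast h

lemma summable_and_tsum_lt_one_of_lt_geometric {g : ℕ → ℝ} (h0 : ∀ j, 0 ≤ g j)
    (h : ∀ j, g j < 1 / 2 / 2 ^ j) : Summable g ∧ ∑' j, g j < 1 := by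
  have hg : Summable g :=
    (summable_geometric_two' 1).of_nonneg_of_le h0 fun j => (h j).le
  refine ⟨hg, ?_⟩
  calc ∑' j, g j < ∑' j : ℕ, 1 / 2 / (2 : ℝ) ^ j :=
        (summable_geometric_two' 1).tsum_lt_tsum_of_nonneg h0 (fun j => (h j).le) (h 0)
    _ = 1 := tsum_geometric_two' 1

lemma sum_range_succ_mul_pow_sub_modEq (d : ℕ → ℕ) (b m : ℕ) :
    ∑ k ∈ range (m + 1), d k * b ^ (m - k) ≡ d m [MOD b] := by
  rw [sum_range_succ, Nat.sub_self, pow_zero, mul_one]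
  have hdvd : b ∣ ∑ k ∈ range m, d k * b ^ (m - k) :=
    dvd_sum fun k hk => (dvd_pow_self b (by simp at hk; omega)).mul_left _
  simpa using (Nat.modEq_zero_iff_dvd.2 hdvd).add_right (d m)

lemma pow_mul_tsum_div_pow {b : ℝ} (hb : b ≠ 0) (d : ℕ → ℝ) (m : ℕ)
    (htail : Summable fun j => d (j + (m + 1)) / b ^ (j + 1)) :
    b ^ m * ∑' k, d k / b ^ k =
      ∑ k ∈ range (m + 1), d k * b ^ (m - k) + ∑' j, d (j + (m + 1)) / b ^ (j + 1) := by
  have hshift : ∀ j, d (j + (m + 1)) / b ^ (j + (m + 1)) = d (j + (m + 1)) / b ^ (j + 1) / b ^ m :=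
    fun j => by rw [div_div, ← pow_add]; ring_nf
  have hs : Summable fun k => d k / b ^ k :=
    (summable_nat_add_iff (m + 1)).1 (by simpa only [hshift] using htail.div_const (b ^ m))
  rw [← hs.sum_add_tsum_nat_add (m + 1), mul_add, mul_sum, ← tsum_mul_left]
  congr 1
  · refine sum_congr rfl fun k hk => ?_
    rw [pow_sub₀ b hb (by simp at hk; omega)]
    ring
  · refine tsum_congr fun j => ?_
    rw [hshift]
    field_simp

lemma floor_pow_mul_tsum_div_pow {b : ℕ} (hb : 0 < b) (d : ℕ → ℕ) (m : ℕ)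
    (htail_summable : Summable fun j => (d (j + (m + 1)) : ℝ) / (b : ℝ) ^ (j + 1))
    (htail : ∑' j, (d (j + (m + 1)) : ℝ) / (b : ℝ) ^ (j + 1) < 1) :
    ⌊(b : ℝ) ^ m * ∑' k, (d k : ℝ) / (b : ℝ) ^ k⌋ =
      ((∑ k ∈ range (m + 1), d k * b ^ (m - k) : ℕ) : ℤ) := by
  have htail_nonneg : 0 ≤ ∑' j, (d (j + (m + 1)) : ℝ) / (b : ℝ) ^ (j + 1) :=
    tsum_nonneg fun j => by positivity
  rw [pow_mul_tsum_div_pow (Nat.cast_pos.2 hb).ne' (fun k => (d k : ℝ)) m htail_summable,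
    Int.floor_eq_iff]
  push_cast
  constructor <;> linarith

theorem floor_pow_mul_tsum_div_pow_emod {b : ℕ} (d : ℕ → ℕ) (m : ℕ) (hdm : d m < b)
    (htail_summable : Summable fun j => (d (j + (m + 1)) : ℝ) / (b : ℝ) ^ (j + 1))
    (htail : ∑' j, (d (j + (m + 1)) : ℝ) / (b : ℝ) ^ (j + 1) < 1) :
    ⌊(b : ℝ) ^ m * ∑' k, (d k : ℝ) / (b : ℝ) ^ k⌋ % b = d m := by
  rw [floor_pow_mul_tsum_div_pow (by omega) d m htail_summable htail, ← Int.natCast_mod,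
    sum_range_succ_mul_pow_sub_modEq, Nat.mod_eq_of_lt hdm]

theorem stmt_2 (t : ℕ → ℕ) (c : ℕ) (hc : 8 ≤ c)
    (hbound : ∀ k : ℕ, 1 ≤ k → (t k) ^ 3 < c ^ k) :
    ∀ n : ℕ, 1 ≤ n →
      (t n : ℤ) =
        ⌊(c : ℝ) ^ (n ^ 2) * ∑' k : ℕ, (t k : ℝ) * (c : ℝ) ^ (-((n * k : ℕ) : ℤ))⌋
          % (c : ℤ) ^ n := by
  intro n hn
  have htn : t n < c ^ n := (Nat.le_self_pow (by norm_num) _).trans_lt (hbound n hn)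
  have hterm : ∀ j, (t (j + (n + 1)) : ℝ) / ((c ^ n : ℕ) : ℝ) ^ (j + 1) < 1 / 2 / 2 ^ j := by
    intro j
    rw [div_div, ← pow_succ']
    refine div_pow_lt_one_div_two_pow (mul_two_pow_lt_pow_pow hc hn (by omega) ?_)
    convert hbound (j + (n + 1)) (by omega) using 2
    omega
  obtain ⟨htail_summable, htail⟩ := summable_and_tsum_lt_one_of_lt_geometric (fun j => by positivity) hterm
  have hrewrite : (c : ℝ) ^ (n ^ 2) * ∑' k : ℕ, (t k : ℝ) * (c : ℝ) ^ (-((n * k : ℕ) : ℤ)) =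
      ((c ^ n : ℕ) : ℝ) ^ n * ∑' k, (t k : ℝ) / ((c ^ n : ℕ) : ℝ) ^ k := by
    simp only [zpow_neg, zpow_natCast, pow_mul, sq, div_eq_mul_inv, Nat.cast_pow]
  rw [hrewrite]
  exact_mod_cast (floor_pow_mul_tsum_div_pow_emod t n htn htail_summable htail).symm
end

section
/- Let A, B, C, a be integers such that A > 0, B > 0, C ≥ 2, C divides A, B does not divide A, B ≡ a (mod C), a ≠ 0, a < 0, and |a|·(⌊A/B⌋ mod C) < C. Then (A mod B) mod C = |a|·(⌊A/B⌋ mod C). -/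
/-! Since `C ∣ A` and `B ≡ a`, the division identity `A % B = A - B * (A / B)` gives
`A % B ≡ -a * (A / B) [ZMOD C]`; when `a < 0` and the right-hand side, with `A / B`
reduced mod `C`, already lies in `[0, C)`, it is the residue itself. -/

theorem Int.emod_modEq_neg_mul_ediv_emod {A B C a : ℤ} (hCA : C ∣ A) (hBa : B ≡ a [ZMOD C]) :
    A % B ≡ -a * (A / B % C) [ZMOD C] :=
  calc A % B = A - B * (A / B) := Int.emod_def A B
    _ ≡ 0 - a * (A / B % C) [ZMOD C] :=
      (Int.modEq_zero_iff_dvd.2 hCA).sub (hBa.mul (Int.mod_modEq _ _).symm)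
    _ = -a * (A / B % C) := by ring

theorem stmt_7_general (A B C a : ℤ) (hC : 2 ≤ C)
    (hCA : C ∣ A) (hBa : B ≡ a [ZMOD C])
    (haneg : a < 0) (hsmall : |a| * ((A / B) % C) < C) :
    (A % B) % C = |a| * ((A / B) % C) := by
  have hnonneg : 0 ≤ |a| * (A / B % C) :=
    mul_nonneg (abs_nonneg a) (Int.emod_nonneg _ (by omega))
  rw [abs_of_neg haneg] at hnonneg hsmall ⊢
  exact (Int.emod_modEq_neg_mul_ediv_emod hCA hBa).eq.trans (Int.emod_eq_of_lt hnonneg hsmall)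

theorem stmt_7 (A B C a : ℤ) (hA : 0 < A) (hB : 0 < B) (hC : 2 ≤ C)
    (hCA : C ∣ A) (hBA : ¬ B ∣ A) (hBa : B ≡ a [ZMOD C]) (ha0 : a ≠ 0)
    (haneg : a < 0) (hsmall : |a| * ((A / B) % C) < C) :
    (A % B) % C = |a| * ((A / B) % C) :=
  stmt_7_general A B C a hC hCA hBa haneg hsmall
end

section
/- Let A, B, C, a be integers such that A > 0, B > 0, C ≥ 2, C divides A, B does not divide A, B ≡ a (mod C), a ≠ 0, a > 0, and a + a·(⌊A/B⌋ mod C) < C. Then ((−A) mod B) mod C = a·(1 + (⌊A/B⌋ mod C)). -/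
/- Write `A = qB + r` with `0 < r < B`. Then `(-A) mod B = B - r = B(1 + q) - A`, which modulo `C`
is `a(1 + (q mod C))` because `C ∣ A` and `B ≡ a`; the smallness hypothesis says this
representative already lies in `[0, C)`. -/

theorem Int.neg_emod_eq_of_not_dvd {A B : ℤ} (hB : 0 ≤ B) (h : ¬ B ∣ A) :
    (-A) % B = B * (1 + A / B) - A := by
  rw [Int.neg_emod, if_neg h, Int.natAbs_of_nonneg hB, Int.emod_def]
  ring

theorem stmt_8_general (A B C a : ℤ) (hB : 0 < B) (hC : 2 ≤ C)
    (hCA : C ∣ A) (hBA : ¬ B ∣ A) (hBa : B ≡ a [ZMOD C])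
    (hapos : 0 < a) (hsmall : a + a * ((A / B) % C) < C) :
    ((-A) % B) % C = a * (1 + (A / B) % C) := by
  have hcong : (-A) % B ≡ a * (1 + (A / B) % C) [ZMOD C] := by
    rw [Int.neg_emod_eq_of_not_dvd hB.le hBA]
    simpa only [sub_zero] using
      (hBa.mul ((Int.mod_modEq _ _).symm.add_left 1)).sub (Int.modEq_zero_iff_dvd.2 hCA)
  have hq : 0 ≤ (A / B) % C := Int.emod_nonneg _ (by omega)
  rw [hcong.eq, Int.emod_eq_of_lt (by positivity) (by rwa [mul_one_add])]

theorem stmt_8 (A B C a : ℤ) (hA : 0 < A) (hB : 0 < B) (hC : 2 ≤ C)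
    (hCA : C ∣ A) (hBA : ¬ B ∣ A) (hBa : B ≡ a [ZMOD C]) (ha0 : a ≠ 0)
    (hapos : 0 < a) (hsmall : a + a * ((A / B) % C) < C) :
    ((-A) % B) % C = a * (1 + (A / B) % C) :=
  stmt_8_general A B C a hB hC hCA hBA hBa hapos hsmall
end

section
/- Let t : ℕ → ℕ, let Ã, B̃ ∈ ℤ[X] be polynomials with positive leading coefficients, let α be the constant coefficient of B̃ with α < 0, and let c ≥ 2 be an integer such that for every integer e ≥ c and every integer n ≥ 1 one has B̃(e^n) > 0, B̃(e^n) does not divide e^(n²)·Ã(e^n), e^(n²)·Ã(e^n) > 0, and t(n) = ⌊e^(n²)·Ã(e^n) / B̃(e^n)⌋ mod e^n. Then there exists a natural number e ≥ c such that for every integer n ≥ 1: |α| · t(n) = ((e^(n²)·Ã(e^n)) mod B̃(e^n)) mod e^n. -/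
open Polynomial

/-!
Take `e = c·|α|` and `x = e^n`. Since `x ∣ e^(n²)·Ã(x)` and `B̃(x) ≡ α (mod x)`, writing
`e^(n²)·Ã(x) = B̃(x)·q + r` gives `r ≡ -α·q ≡ |α|·t(n) (mod x)`. Comparing with base `c`
shows `t(n) < c^n`, so `0 ≤ |α|·t(n) < |α|^n·c^n = x` and the residue is exactly `|α|·t(n)`.
-/

theorem Polynomial.eval_modEq_coeff_zero (p : ℤ[X]) (x : ℤ) : p.eval x ≡ p.coeff 0 [ZMOD x] := by
  simpa [coeff_zero_eq_eval_zero] using (Int.modEq_iff_dvd.mpr (sub_dvd_eval_sub x 0 p)).symm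

theorem Int.emod_modEq_neg_mul_ediv {N b x α : ℤ} (hN : x ∣ N) (hb : b ≡ α [ZMOD x]) :
    N % b ≡ -α * (N / b) [ZMOD x] := by
  have hN0 : N ≡ 0 [ZMOD x] := (Int.modEq_zero_iff_dvd.mpr hN)
  calc N % b = N - b * (N / b) := Int.emod_def N b
    _ ≡ 0 - α * (N / b) [ZMOD x] := hN0.sub (hb.mul_right _)
    _ = -α * (N / b) := by ring

theorem Nat.mul_lt_mul_pow_of_lt_pow {a c t n : ℕ} (ha : 0 < a) (hn : n ≠ 0) (ht : t < c ^ n) :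
    a * t < (c * a) ^ n :=
  calc a * t < a * c ^ n := Nat.mul_lt_mul_of_pos_left ht ha
    _ ≤ a ^ n * c ^ n := Nat.mul_le_mul_right _ (Nat.le_self_pow hn a)
    _ = (c * a) ^ n := by rw [mul_pow, mul_comm]

theorem stmt_9_general (t : ℕ → ℕ) (A B : Polynomial ℤ)
    (α : ℤ) (hα : α = B.coeff 0) (hαneg : α < 0)
    (c : ℕ) (hc : 2 ≤ c)
    (hrep : ∀ e : ℕ, c ≤ e → ∀ n : ℕ, 1 ≤ n →
      0 < B.eval ((e : ℤ) ^ n) ∧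
      ¬ (B.eval ((e : ℤ) ^ n) ∣ (e : ℤ) ^ (n ^ 2) * A.eval ((e : ℤ) ^ n)) ∧
      0 < (e : ℤ) ^ (n ^ 2) * A.eval ((e : ℤ) ^ n) ∧
      (t n : ℤ) =
        ((e : ℤ) ^ (n ^ 2) * A.eval ((e : ℤ) ^ n) / B.eval ((e : ℤ) ^ n)) % (e : ℤ) ^ n) :
    ∃ e : ℕ, c ≤ e ∧ ∀ n : ℕ, 1 ≤ n →
      |α| * (t n : ℤ) =
        (((e : ℤ) ^ (n ^ 2) * A.eval ((e : ℤ) ^ n)) % B.eval ((e : ℤ) ^ n)) % (e : ℤ) ^ n := by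
  have ha : 0 < α.natAbs := Int.natAbs_pos.mpr hαneg.ne
  refine ⟨c * α.natAbs, Nat.le_mul_of_pos_right c ha, fun n hn => ?_⟩
  obtain ⟨-, -, -, ht⟩ := hrep _ (Nat.le_mul_of_pos_right c ha) n hn
  obtain ⟨-, -, -, htc⟩ := hrep c le_rfl n hn
  have htc_lt : t n < c ^ n := by
    have : (t n : ℤ) < (c : ℤ) ^ n := htc ▸ Int.emod_lt_of_pos _ (by positivity)
    exact_mod_cast this
  set x : ℤ := ((c * α.natAbs : ℕ) : ℤ) ^ n
  set N : ℤ := ((c * α.natAbs : ℕ) : ℤ) ^ (n ^ 2) * A.eval x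
  have hx_dvd : x ∣ N := dvd_mul_of_dvd_left (pow_dvd_pow _ (Nat.le_self_pow two_ne_zero n)) _
  have hcong : N % B.eval x ≡ |α| * t n [ZMOD x] := by
    rw [ht, abs_of_neg hαneg]
    exact (Int.emod_modEq_neg_mul_ediv hx_dvd (hα ▸ B.eval_modEq_coeff_zero x)).trans
      ((Int.mod_modEq _ x).symm.mul_left _)
  have hlt : |α| * (t n : ℤ) < x := by
    rw [Int.abs_eq_natAbs, show x = ((c * α.natAbs) ^ n : ℕ) by push_cast [x]; rfl]
    exact_mod_cast Nat.mul_lt_mul_pow_of_lt_pow ha (by omega) htc_lt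
  rw [hcong, Int.emod_eq_of_lt (by positivity) hlt]

theorem stmt_9 (t : ℕ → ℕ) (A B : Polynomial ℤ)
    (hA : 0 < A.leadingCoeff) (hB : 0 < B.leadingCoeff)
    (α : ℤ) (hα : α = B.coeff 0) (hαneg : α < 0)
    (c : ℕ) (hc : 2 ≤ c)
    (hrep : ∀ e : ℕ, c ≤ e → ∀ n : ℕ, 1 ≤ n →
      0 < B.eval ((e : ℤ) ^ n) ∧
      ¬ (B.eval ((e : ℤ) ^ n) ∣ (e : ℤ) ^ (n ^ 2) * A.eval ((e : ℤ) ^ n)) ∧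
      0 < (e : ℤ) ^ (n ^ 2) * A.eval ((e : ℤ) ^ n) ∧
      (t n : ℤ) =
        ((e : ℤ) ^ (n ^ 2) * A.eval ((e : ℤ) ^ n) / B.eval ((e : ℤ) ^ n)) % (e : ℤ) ^ n) :
    ∃ e : ℕ, c ≤ e ∧ ∀ n : ℕ, 1 ≤ n →
      |α| * (t n : ℤ) =
        (((e : ℤ) ^ (n ^ 2) * A.eval ((e : ℤ) ^ n)) % B.eval ((e : ℤ) ^ n)) % (e : ℤ) ^ n :=
  stmt_9_general t A B α hα hαneg c hc hrep
end

section
/- Let t : ℕ → ℕ, let Ã, B̃ ∈ ℤ[X] be polynomials with positive leading coefficients, let α be the constant coefficient of B̃ with α > 0, and let c ≥ 2 be an integer such that for every integer e ≥ c and every integer n ≥ 1 one has B̃(e^n) > 0, B̃(e^n) does not divide e^(n²)·Ã(e^n), e^(n²)·Ã(e^n) > 0, and t(n) = ⌊e^(n²)·Ã(e^n) / B̃(e^n)⌋ mod e^n. Then there exists a natural number e ≥ c such that for every integer n ≥ 1: α · (t(n) + 1) = ((−e^(n²)·Ã(e^n)) mod B̃(e^n)) mod e^n. -/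
/-!
Write `X = e ^ n`, `N = e ^ (n ^ 2) * Ã(X)` and `b = B̃(X)`. Since `b ∤ N`, the least nonnegative
residue of `-N` modulo `b` is `b * (⌊N / b⌋ + 1) - N`. Modulo `X` we have `N ≡ 0`, `b ≡ α` and
`⌊N / b⌋ ≡ t(n)`, so this residue is `≡ α * (t(n) + 1) (mod X)`. Taking `e = (α + 1)(c + 1)`, the
bound `t(n) < (c + 1) ^ n` (from the hypothesis at `c + 1`) gives `0 ≤ α * (t(n) + 1) < X`, so the
congruence is an equality of residues.
-/

open Polynomial

theorem Int.neg_emod_of_not_dvd {a b : ℤ} (hb : 0 < b) (h : ¬ b ∣ a) :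
    -a % b = b * (a / b + 1) - a := by
  rw [Int.neg_emod, if_neg h, Int.natAbs_of_nonneg hb.le, Int.emod_def]
  ring

theorem Int.neg_emod_emod_of_modEq {a b X α : ℤ} (hb : 0 < b) (h : ¬ b ∣ a) (hXa : X ∣ a)
    (hbα : b ≡ α [ZMOD X]) (h0 : 0 ≤ α * (a / b % X + 1)) (hlt : α * (a / b % X + 1) < X) :
    -a % b % X = α * (a / b % X + 1) := by
  have hq : a / b ≡ a / b % X [ZMOD X] := (Int.mod_modEq _ _).symm
  have hcong : -a % b ≡ α * (a / b % X + 1) [ZMOD X] :=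
    calc -a % b = b * (a / b + 1) - a := Int.neg_emod_of_not_dvd hb h
      _ ≡ α * (a / b % X + 1) - 0 [ZMOD X] :=
        (hbα.mul (hq.add_right 1)).sub ((Int.modEq_zero_iff_dvd).mpr hXa)
      _ = α * (a / b % X + 1) := sub_zero _
  rw [hcong.eq, Int.emod_eq_of_lt h0 hlt]

theorem Int.mul_add_one_lt_mul_pow {a t d : ℤ} {n : ℕ} (ha : 0 ≤ a) (ht : 0 ≤ t)
    (htd : t < d ^ n) (hn : n ≠ 0) : a * (t + 1) < ((a + 1) * d) ^ n := by
  have hd : 0 < d ^ n := ht.trans_lt htd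
  calc a * (t + 1) ≤ a * d ^ n := mul_le_mul_of_nonneg_left htd ha
    _ < (a + 1) * d ^ n := by linarith
    _ ≤ (a + 1) ^ n * d ^ n := mul_le_mul_of_nonneg_right (le_self_pow₀ (by linarith) hn) hd.le
    _ = ((a + 1) * d) ^ n := (mul_pow _ _ _).symm

theorem stmt_10_general (t : ℕ → ℕ) (A B : Polynomial ℤ)
    (α : ℤ) (hα : α = B.coeff 0) (hαpos : 0 < α)
    (c : ℕ)
    (hrep : ∀ e : ℕ, c ≤ e → ∀ n : ℕ, 1 ≤ n →
      0 < B.eval ((e : ℤ) ^ n) ∧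
      ¬ (B.eval ((e : ℤ) ^ n) ∣ (e : ℤ) ^ (n ^ 2) * A.eval ((e : ℤ) ^ n)) ∧
      0 < (e : ℤ) ^ (n ^ 2) * A.eval ((e : ℤ) ^ n) ∧
      (t n : ℤ) =
        ((e : ℤ) ^ (n ^ 2) * A.eval ((e : ℤ) ^ n) / B.eval ((e : ℤ) ^ n)) % (e : ℤ) ^ n) :
    ∃ e : ℕ, c ≤ e ∧ ∀ n : ℕ, 1 ≤ n →
      α * ((t n : ℤ) + 1) =
        ((-((e : ℤ) ^ (n ^ 2) * A.eval ((e : ℤ) ^ n))) % B.eval ((e : ℤ) ^ n)) % (e : ℤ) ^ n := by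
  have hce : c ≤ (α.toNat + 1) * (c + 1) := by nlinarith
  refine ⟨(α.toNat + 1) * (c + 1), hce, fun n hn => ?_⟩
  have heZ : (((α.toNat + 1) * (c + 1) : ℕ) : ℤ) = (α + 1) * ((c + 1 : ℕ) : ℤ) := by
    push_cast
    rw [Int.toNat_of_nonneg hαpos.le]
  obtain ⟨hBpos, hndvd, -, ht⟩ := hrep _ hce n hn
  have htc : (t n : ℤ) < ((c + 1 : ℕ) : ℤ) ^ n := by
    rw [(hrep (c + 1) (by omega) n hn).2.2.2]
    exact Int.emod_lt_of_pos _ (by positivity)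
  have hlt := Int.mul_add_one_lt_mul_pow hαpos.le (Int.natCast_nonneg _) htc (by omega)
  rw [← heZ, ht] at hlt
  rw [ht]
  refine (Int.neg_emod_emod_of_modEq hBpos hndvd ?_ (hα ▸ B.eval_modEq_coeff_zero _) ?_ hlt).symm
  · exact dvd_mul_of_dvd_left (pow_dvd_pow _ (Nat.le_self_pow two_ne_zero n)) _
  · exact mul_nonneg hαpos.le (by rw [← ht]; positivity)

theorem stmt_10 (t : ℕ → ℕ) (A B : Polynomial ℤ)
    (hA : 0 < A.leadingCoeff) (hB : 0 < B.leadingCoeff)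
    (α : ℤ) (hα : α = B.coeff 0) (hαpos : 0 < α)
    (c : ℕ) (hc : 2 ≤ c)
    (hrep : ∀ e : ℕ, c ≤ e → ∀ n : ℕ, 1 ≤ n →
      0 < B.eval ((e : ℤ) ^ n) ∧
      ¬ (B.eval ((e : ℤ) ^ n) ∣ (e : ℤ) ^ (n ^ 2) * A.eval ((e : ℤ) ^ n)) ∧
      0 < (e : ℤ) ^ (n ^ 2) * A.eval ((e : ℤ) ^ n) ∧
      (t n : ℤ) =
        ((e : ℤ) ^ (n ^ 2) * A.eval ((e : ℤ) ^ n) / B.eval ((e : ℤ) ^ n)) % (e : ℤ) ^ n) :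
    ∃ e : ℕ, c ≤ e ∧ ∀ n : ℕ, 1 ≤ n →
      α * ((t n : ℤ) + 1) =
        ((-((e : ℤ) ^ (n ^ 2) * A.eval ((e : ℤ) ^ n))) % B.eval ((e : ℤ) ^ n)) % (e : ℤ) ^ n :=
  stmt_10_general t A B α hα hαpos c hrep
end

section
/- Let t : ℕ → ℕ, let Ã, B̃ ∈ ℤ[X] be polynomials with positive leading coefficients, let α be the constant coefficient of B̃ with α ≠ 0, and let c ≥ 2 be an integer such that for every integer e ≥ c and every integer n ≥ 1 one has B̃(e^n) > 0, B̃(e^n) does not divide e^(n²)·Ã(e^n), e^(n²)·Ã(e^n) > 0, and t(n) = ⌊e^(n²)·Ã(e^n) / B̃(e^n)⌋ mod e^n. Then there exists a natural number e ≥ c such that for every integer n ≥ 1: t(n) = (−1 − sgn(α))/2 + (1/|α|)·(((−sgn(α)·e^(n²)·Ã(e^n)) mod B̃(e^n)) mod e^n), equivalently |α|·(t(n) + (1 + sgn(α))/2) = ((−sgn(α)·e^(n²)·Ã(e^n)) mod B̃(e^n)) mod e^n. -/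
/-!
Put `x = e ^ n`, `N = e ^ (n ^ 2) * A(x)` and `b = B(x)`. Since `x ∣ N` and `b ≡ α [ZMOD x]`,
Euclidean division `M = b * (M / b) + M % b` of `M = -sgn(α) * N` gives
`M % b ≡ -α * (M / b) = |α| * (N / b + (1 + sgn α) / 2) [ZMOD x]`, and `N / b ≡ t n [ZMOD x]`.
As `t n` does not depend on `e`, taking `e = c` shows `t n < c ^ n`; so for
`e = (|α| + 1) * c` the representative `|α| * (t n + (1 + sgn α) / 2)` already lies in `[0, x)`.
-/

open Polynomial

theorem Polynomial.dvd_eval_sub_coeff_zero {R : Type*} [CommRing R] (p : R[X]) (x : R) :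
    x ∣ p.eval x - p.coeff 0 := by
  simpa [coeff_zero_eq_eval_zero] using sub_dvd_eval_sub x 0 p

theorem mul_pow_lt_add_one_mul_pow {R : Type*} [CommSemiring R] [PartialOrder R]
    [IsStrictOrderedRing R] {a c : R} (ha : 0 ≤ a) (hc : 0 < c) {n : ℕ} (hn : n ≠ 0) :
    a * c ^ n < ((a + 1) * c) ^ n :=
  calc a * c ^ n < (a + 1) * c ^ n := by gcongr; exact lt_add_one a
    _ ≤ (a + 1) ^ n * c ^ n := by gcongr; exact le_self_pow₀ (le_add_of_nonneg_left ha) hn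
    _ = ((a + 1) * c) ^ n := (mul_pow _ _ _).symm

namespace Int

theorem emod_modEq_neg_mul_ediv_s11 {M b x a : ℤ} (hxM : x ∣ M) (hxb : x ∣ b - a) :
    M % b ≡ -a * (M / b) [ZMOD x] := by
  have h : -a * (M / b) - M % b = (b - a) * (M / b) - M := by rw [Int.emod_def]; ring
  exact Int.modEq_iff_dvd.mpr (h ▸ (hxb.mul_right (M / b)).sub hxM)

theorem neg_mul_neg_sign_mul_ediv {N b α : ℤ} (hb : 0 < b) (hndvd : ¬ b ∣ N) (hα : α ≠ 0) :
    -α * (-α.sign * N / b) = |α| * (N / b + (1 + α.sign) / 2) := by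
  rcases hα.lt_or_gt with hneg | hpos
  · simp [Int.sign_eq_neg_one_of_neg hneg, abs_of_neg hneg]
  · simp [Int.sign_eq_one_of_pos hpos, abs_of_pos hpos, Int.neg_ediv, hndvd,
      Int.sign_eq_one_of_pos hb]
    ring

theorem abs_mul_ediv_emod_add_eq {N b x α : ℤ} (hb : 0 < b) (hndvd : ¬ b ∣ N) (hα : α ≠ 0)
    (hxN : x ∣ N) (hxb : x ∣ b - α) (hlt : |α| * (N / b % x + 1) < x) :
    |α| * (N / b % x + (1 + α.sign) / 2) = -α.sign * N % b % x := by
  have hx : x ≠ 0 := by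
    rintro rfl
    exact hndvd (by simp_all)
  have hq : 0 ≤ N / b % x := Int.emod_nonneg _ hx
  have hk : 0 ≤ (1 + α.sign) / 2 ∧ (1 + α.sign) / 2 ≤ 1 := by
    rcases α.sign_trichotomy with h | h | h <;> simp [h]
  symm
  calc -α.sign * N % b % x = -α * (-α.sign * N / b) % x :=
        Int.emod_modEq_neg_mul_ediv_s11 (hxN.mul_left _) hxb
    _ = |α| * (N / b + (1 + α.sign) / 2) % x := by rw [neg_mul_neg_sign_mul_ediv hb hndvd hα]
    _ = |α| * (N / b % x + (1 + α.sign) / 2) % x :=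
        ((Int.mod_modEq _ _).symm.add_right _).mul_left _
    _ = |α| * (N / b % x + (1 + α.sign) / 2) := by
        refine Int.emod_eq_of_lt (mul_nonneg (abs_nonneg α) (add_nonneg hq hk.1))
          (lt_of_le_of_lt ?_ hlt)
        gcongr
        exact hk.2

end Int

theorem stmt_11_general (t : ℕ → ℕ) (A B : Polynomial ℤ)
    (α : ℤ) (hα : α = B.coeff 0) (hαne : α ≠ 0)
    (c : ℕ) (hc : 2 ≤ c)
    (hrep : ∀ e : ℕ, c ≤ e → ∀ n : ℕ, 1 ≤ n →
      0 < B.eval ((e : ℤ) ^ n) ∧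
      ¬ (B.eval ((e : ℤ) ^ n) ∣ (e : ℤ) ^ (n ^ 2) * A.eval ((e : ℤ) ^ n)) ∧
      0 < (e : ℤ) ^ (n ^ 2) * A.eval ((e : ℤ) ^ n) ∧
      (t n : ℤ) =
        ((e : ℤ) ^ (n ^ 2) * A.eval ((e : ℤ) ^ n) / B.eval ((e : ℤ) ^ n)) % (e : ℤ) ^ n) :
    ∃ e : ℕ, c ≤ e ∧ ∀ n : ℕ, 1 ≤ n →
      |α| * ((t n : ℤ) + (1 + Int.sign α) / 2) =
        ((-(Int.sign α) * ((e : ℤ) ^ (n ^ 2) * A.eval ((e : ℤ) ^ n))) % B.eval ((e : ℤ) ^ n)) % (e : ℤ) ^ n := by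
  set e := (α.natAbs + 1) * c
  have he : c ≤ e := Nat.le_mul_of_pos_left c α.natAbs.succ_pos
  refine ⟨e, he, fun n hn => ?_⟩
  obtain ⟨hBpos, hndvd, -, ht⟩ := hrep e he n hn
  have hcpos : (0 : ℤ) < c := by omega
  have htc : (t n : ℤ) < (c : ℤ) ^ n := by
    rw [(hrep c le_rfl n hn).2.2.2]
    exact Int.emod_lt_of_pos _ (pow_pos hcpos n)
  rw [ht]
  refine Int.abs_mul_ediv_emod_add_eq hBpos hndvd hαne ?_ ?_ ?_
  · exact (pow_dvd_pow _ (Nat.le_self_pow two_ne_zero n)).mul_right _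
  · simpa [hα] using B.dvd_eval_sub_coeff_zero _
  · rw [← ht]
    calc |α| * (t n + 1) ≤ |α| * c ^ n := by gcongr; omega
      _ < ((|α| + 1) * c) ^ n := mul_pow_lt_add_one_mul_pow (abs_nonneg α) hcpos (by omega)
      _ = (e : ℤ) ^ n := by simp [e]

theorem stmt_11 (t : ℕ → ℕ) (A B : Polynomial ℤ)
    (hA : 0 < A.leadingCoeff) (hB : 0 < B.leadingCoeff)
    (α : ℤ) (hα : α = B.coeff 0) (hαne : α ≠ 0)
    (c : ℕ) (hc : 2 ≤ c)
    (hrep : ∀ e : ℕ, c ≤ e → ∀ n : ℕ, 1 ≤ n →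
      0 < B.eval ((e : ℤ) ^ n) ∧
      ¬ (B.eval ((e : ℤ) ^ n) ∣ (e : ℤ) ^ (n ^ 2) * A.eval ((e : ℤ) ^ n)) ∧
      0 < (e : ℤ) ^ (n ^ 2) * A.eval ((e : ℤ) ^ n) ∧
      (t n : ℤ) =
        ((e : ℤ) ^ (n ^ 2) * A.eval ((e : ℤ) ^ n) / B.eval ((e : ℤ) ^ n)) % (e : ℤ) ^ n) :
    ∃ e : ℕ, c ≤ e ∧ ∀ n : ℕ, 1 ≤ n →
      |α| * ((t n : ℤ) + (1 + Int.sign α) / 2) =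
        ((-(Int.sign α) * ((e : ℤ) ^ (n ^ 2) * A.eval ((e : ℤ) ^ n))) % B.eval ((e : ℤ) ^ n)) % (e : ℤ) ^ n :=
  stmt_11_general t A B α hα hαne c hc hrep
end

section
/- For every integer n ≥ 1, the n-th Fibonacci number satisfies F(n) = (3^(n²+n) mod (3^(2n) − 3^n − 1)) mod 3^n. -/
/-!
Put `m = 3 ^ n`. Since `m ^ 2 ≡ m + 1` modulo `m ^ 2 - m - 1`, the powers of `m` reduce like
the powers of the golden ratio: `m ^ (n + 1) ≡ F(n + 1) m + F(n)`. As `F(n) ≤ F(n + 1) ≤ m - 2`,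
the right-hand side is already the remainder of `3 ^ (n ^ 2 + n) = m ^ (n + 1)`, and it is the
two-digit base-`m` numeral with low digit `F(n)`.
-/

theorem pow_succ_eq_fib_mul_add_fib {R : Type*} [CommRing R] {x : R} (hx : x ^ 2 = x + 1) :
    ∀ n : ℕ, x ^ (n + 1) = Nat.fib (n + 1) * x + Nat.fib n
  | 0 => by simp
  | n + 1 => by
    have ih := pow_succ_eq_fib_mul_add_fib hx n
    push_cast [Nat.fib_add_two]
    linear_combination (Nat.fib (n + 1) : R) * hx + x * ih

theorem Int.pow_succ_modEq_fib (m : ℤ) (n : ℕ) :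
    m ^ (n + 1) ≡ Nat.fib (n + 1) * m + Nat.fib n [ZMOD m ^ 2 - m - 1] := by
  let I := Ideal.span {m ^ 2 - m - 1}
  have hm : (Ideal.Quotient.mk I m) ^ 2 = Ideal.Quotient.mk I m + 1 := by
    rw [← sub_eq_zero, ← sub_sub, ← map_pow, ← map_sub, ← map_one (Ideal.Quotient.mk I),
      ← map_sub, Ideal.Quotient.eq_zero_iff_mem]
    exact Ideal.mem_span_singleton_self _
  have h := pow_succ_eq_fib_mul_add_fib hm n
  rw [← map_pow, ← map_natCast (Ideal.Quotient.mk I), ← map_natCast (Ideal.Quotient.mk I),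
    ← map_mul, ← map_add, Ideal.Quotient.eq, Ideal.mem_span_singleton] at h
  exact (Int.modEq_iff_dvd.mpr h).symm

theorem Int.pow_succ_emod_eq_fib {m : ℤ} {n : ℕ} (hm : Nat.fib (n + 1) + 2 ≤ m) :
    m ^ (n + 1) % (m ^ 2 - m - 1) = Nat.fib (n + 1) * m + Nat.fib n := by
  have hfib : (Nat.fib n : ℤ) ≤ Nat.fib (n + 1) := mod_cast Nat.fib_le_fib_succ
  rw [Int.pow_succ_modEq_fib m n]
  exact Int.emod_eq_of_lt (by nlinarith) (by nlinarith)

theorem Nat.fib_add_one_add_two_le_three_pow {n : ℕ} (hn : 1 ≤ n) :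
    fib (n + 1) + 2 ≤ 3 ^ n := by
  induction n, hn using Nat.le_induction with
  | base => simp
  | succ n _ ih =>
    have := @fib_le_fib_succ n
    rw [fib_add_two, pow_succ]
    omega

theorem stmt_13 (n : ℕ) (hn : 1 ≤ n) :
    (Nat.fib n : ℤ) =
      ((3 : ℤ) ^ (n ^ 2 + n) % ((3 : ℤ) ^ (2 * n) - 3 ^ n - 1)) % (3 : ℤ) ^ n := by
  have hm : (Nat.fib (n + 1) : ℤ) + 2 ≤ 3 ^ n :=
    mod_cast Nat.fib_add_one_add_two_le_three_pow hn
  have hfib : (Nat.fib n : ℤ) ≤ Nat.fib (n + 1) := mod_cast Nat.fib_le_fib_succ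
  set m : ℤ := 3 ^ n
  have hmod : (3 : ℤ) ^ (2 * n) - 3 ^ n - 1 = m ^ 2 - m - 1 := by rw [← pow_mul, mul_comm]
  have hpow : (3 : ℤ) ^ (n ^ 2 + n) = m ^ (n + 1) := by rw [← pow_mul]; ring_nf
  rw [hmod, hpow, Int.pow_succ_emod_eq_fib hm, add_comm, Int.add_mul_emod_self_right]
  exact (Int.emod_eq_of_lt (by positivity) (by linarith)).symm
end

section
/- For every integer n ≥ 1, the n-th Lucas number satisfies L(n) = ((2·5^(n²+2n) − 5^(n²+n)) mod (5^(2n) − 5^n − 1)) mod 5^n. -/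
/-
Put `x = 5 ^ n`. Modulo `x ^ 2 - x - 1` we have `x ^ 2 ≡ x + 1`, so the sequence `x ^ k` satisfies
the Lucas recurrence and `2 x ^ (n + 2) - x ^ (n + 1) ≡ L(n + 1) x + L(n)`. Since
`L(n), L(n + 1) ≤ x - 2`, the right-hand side is already the least nonnegative residue, and
reducing it modulo `x` leaves `L(n)`.
-/

/-- The Lucas numbers: `L(0) = 2`, `L(1) = 1`, `L(n+2) = L(n+1) + L(n)`. -/
def lucas : ℕ → ℤ
  | 0 => 2
  | 1 => 1
  | n + 2 => lucas (n + 1) + lucas n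

theorem lucas_add_two (n : ℕ) : lucas (n + 2) = lucas (n + 1) + lucas n := rfl

theorem lucas_nonneg (n : ℕ) : 0 ≤ lucas n := by
  induction n using Nat.twoStepInduction with
  | zero => decide
  | one => decide
  | more n h₀ h₁ => rw [lucas_add_two]; positivity

theorem lucas_succ_le_lucas_add_two (n : ℕ) : lucas (n + 1) ≤ lucas (n + 2) := by
  rw [lucas_add_two]
  linarith [lucas_nonneg n]

theorem lucas_succ_le_three_pow (n : ℕ) : lucas (n + 1) ≤ 3 ^ n := by
  induction n using Nat.twoStepInduction with
  | zero => decide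
  | one => decide
  | more n h₀ h₁ =>
    rw [lucas_add_two]
    calc lucas (n + 2) + lucas (n + 1) ≤ 3 ^ (n + 1) + 3 ^ n := add_le_add h₁ h₀
      _ ≤ 3 ^ (n + 2) := by ring_nf; linarith [pow_nonneg (by norm_num : (0 : ℤ) ≤ 3) n]

theorem lucas_add_two_add_two_le_five_pow (n : ℕ) : lucas (n + 2) + 2 ≤ 5 ^ (n + 1) := by
  have h₃ : (3 : ℤ) ^ n ≤ 5 ^ n := pow_le_pow_left₀ (by norm_num) (by norm_num) n
  have h₅ : (1 : ℤ) ≤ 5 ^ n := one_le_pow₀ (by norm_num)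
  calc lucas (n + 2) + 2 ≤ 3 ^ (n + 1) + 2 := by linarith [lucas_succ_le_three_pow (n + 1)]
    _ ≤ 5 ^ (n + 1) := by rw [pow_succ, pow_succ]; linarith

theorem sq_sub_sub_one_dvd_pow_mul_sub_lucas {R : Type*} [CommRing R] (x : R) (n : ℕ) :
    x ^ 2 - x - 1 ∣ x ^ (n + 1) * (2 * x - 1) - (lucas (n + 1) * x + lucas n) := by
  induction n using Nat.twoStepInduction with
  | zero => exact ⟨2, by simp [lucas]; ring⟩
  | one => exact ⟨2 * x + 1, by simp [lucas]; ring⟩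
  | more n h₀ h₁ =>
    have := dvd_add (dvd_add h₁ h₀) (dvd_mul_right (x ^ 2 - x - 1) (x ^ (n + 1) * (2 * x - 1)))
    convert this using 1
    rw [lucas_add_two, lucas_add_two]
    push_cast
    ring

theorem stmt_14 (n : ℕ) (hn : 1 ≤ n) :
    lucas n =
      ((2 * (5 : ℤ) ^ (n ^ 2 + 2 * n) - 5 ^ (n ^ 2 + n)) % ((5 : ℤ) ^ (2 * n) - 5 ^ n - 1))
        % (5 : ℤ) ^ n := by
  obtain ⟨m, rfl⟩ := Nat.exists_eq_add_of_le' hn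
  set x : ℤ := 5 ^ (m + 1) with hx
  have h_num : 2 * (5 : ℤ) ^ ((m + 1) ^ 2 + 2 * (m + 1)) - 5 ^ ((m + 1) ^ 2 + (m + 1)) =
      x ^ (m + 2) * (2 * x - 1) := by
    rw [hx, ← pow_mul]; ring
  have h_mod : (5 : ℤ) ^ (2 * (m + 1)) - x - 1 = x ^ 2 - x - 1 := by rw [hx, ← pow_mul]; ring
  have hL₀ := lucas_nonneg (m + 1)
  have hL := lucas_succ_le_lucas_add_two m
  have hx₁ : lucas (m + 2) + 2 ≤ x := lucas_add_two_add_two_le_five_pow m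
  have h_congr :
      lucas (m + 2) * x + lucas (m + 1) ≡ x ^ (m + 2) * (2 * x - 1) [ZMOD x ^ 2 - x - 1] :=
    Int.modEq_iff_dvd.2 (by simpa using sq_sub_sub_one_dvd_pow_mul_sub_lucas x (m + 1))
  have h_residue :
      x ^ (m + 2) * (2 * x - 1) % (x ^ 2 - x - 1) = lucas (m + 2) * x + lucas (m + 1) := by
    rw [← h_congr, Int.emod_eq_of_lt (by nlinarith [lucas_nonneg (m + 2)]) (by nlinarith)]
  rw [h_num, h_mod, h_residue, Int.mul_add_emod_self_right, Int.emod_eq_of_lt hL₀ (by linarith)]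
end

section
/- For every integer n ≥ 1, one has (1/2)·(((−6^(n²+n)) mod (6^(2n) − 3·6^n + 2)) mod 6^n) − 1 = 2^n − 1; equivalently, ((−6^(n²+n)) mod (6^(2n) − 3·6^n + 2)) mod 6^n = 2^(n+1), where the computation is carried out in the integers. -/
/-!
Put `x = 6^n`, so the modulus is `(x - 1)(x - 2)` and `6^(n² + n) = x^(n+1)`. By the Chinese
remainder theorem, `-x^k` is determined modulo `(x - 1)(x - 2)` by its residues `-1` and `-2^k`;
the representative `2^k + x(x - 2 - 2^k)` has both, lies in `[0, (x - 1)(x - 2))` once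
`2^k + 2 ≤ x`, and leaves the remainder `2^k` modulo `x`.
-/

lemma two_pow_succ_add_two_le_six_pow {n : ℕ} (hn : 1 ≤ n) : 2 ^ (n + 1) + 2 ≤ 6 ^ n := by
  obtain ⟨m, rfl⟩ := Nat.exists_eq_add_of_le' hn
  have h26 : 2 ^ m ≤ 6 ^ m := Nat.pow_le_pow_left (by norm_num) m
  have h1 : 1 ≤ 6 ^ m := Nat.one_le_pow _ _ (by norm_num)
  rw [pow_succ, pow_succ, pow_succ]
  omega

lemma sub_one_mul_sub_two_dvd_pow_add (x : ℤ) (k : ℕ) :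
    (x - 1) * (x - 2) ∣ x ^ k + (2 ^ k + x * (x - 2 - 2 ^ k)) := by
  have hcop : IsCoprime (x - 1) (x - 2) := ⟨1, -1, by ring⟩
  refine hcop.mul_dvd ?_ ?_
  · have h := sub_dvd_pow_sub_pow x 1 k
    rw [one_pow] at h
    convert dvd_add h (dvd_mul_right (x - 1) (x - 1 - 2 ^ k)) using 1
    ring
  · convert dvd_add (sub_dvd_pow_sub_pow x 2 k) (dvd_mul_left (x - 2) (x - 2 ^ k)) using 1
    ring

lemma neg_pow_emod_sub_one_mul_sub_two {x : ℤ} {k : ℕ} (hx : 2 ^ k + 2 ≤ x) :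
    -x ^ k % ((x - 1) * (x - 2)) = 2 ^ k + x * (x - 2 - 2 ^ k) := by
  have ht : (1 : ℤ) ≤ 2 ^ k := one_le_pow₀ (by norm_num)
  have hmod : -x ^ k ≡ 2 ^ k + x * (x - 2 - 2 ^ k) [ZMOD (x - 1) * (x - 2)] :=
    Int.modEq_iff_dvd.mpr <| by
      rw [sub_neg_eq_add, add_comm]; exact sub_one_mul_sub_two_dvd_pow_add x k
  rw [hmod, Int.emod_eq_of_lt (by nlinarith) (by nlinarith)]

theorem stmt_17 (n : ℕ) (hn : 1 ≤ n) :
    ((-(6 : ℤ) ^ (n ^ 2 + n)) % ((6 : ℤ) ^ (2 * n) - 3 * 6 ^ n + 2)) % (6 : ℤ) ^ n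
      = 2 ^ (n + 1) := by
  have hx : (2 : ℤ) ^ (n + 1) + 2 ≤ 6 ^ n := by exact_mod_cast two_pow_succ_add_two_le_six_pow hn
  have hpow : (6 : ℤ) ^ (n ^ 2 + n) = (6 ^ n) ^ (n + 1) := by rw [← pow_mul]; ring_nf
  have hmod : (6 : ℤ) ^ (2 * n) - 3 * 6 ^ n + 2 = (6 ^ n - 1) * (6 ^ n - 2) := by
    rw [pow_mul']; ring
  rw [hpow, hmod, neg_pow_emod_sub_one_mul_sub_two hx, Int.add_mul_emod_self_left]
  exact Int.emod_eq_of_lt (by positivity) (by linarith)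
end

section
/- For every integer n ≥ 1, one has (1/2)·(((−2·9^(n²+2n) + 3·9^(n²+n)) mod (9^(2n) − 3·9^n + 2)) mod 9^n) − 1 = 2^n + 1; equivalently, ((−2·9^(n²+2n) + 3·9^(n²+n)) mod (9^(2n) − 3·9^n + 2)) mod 9^n = 2^(n+1) + 4, where the computation is carried out in the integers. -/
/-!
Put `x = 9 ^ n`, so that the dividend is `-2 x^(n+2) + 3 x^(n+1)` and the modulus is
`(x - 1)(x - 2)`. Reducing modulo `x - 1` and `x - 2` separately shows that the dividend is
congruent to `x (x - c) + c` with `c = 2^(n+1) + 4`; since `c < x` this number already lies in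
`[0, (x - 1)(x - 2))`, so it is the remainder, and its residue modulo `x` is `c`.
-/

lemma IsCoprime.sub_one_sub_two {R : Type*} [CommRing R] (x : R) : IsCoprime (x - 1) (x - 2) :=
  ⟨1, -1, by ring⟩

lemma Int.modEq_sub_one_mul_sub_two {x a b : ℤ} (h₁ : a ≡ b [ZMOD x - 1])
    (h₂ : a ≡ b [ZMOD x - 2]) : a ≡ b [ZMOD (x - 1) * (x - 2)] :=
  Int.modEq_iff_dvd.2 <|
    (IsCoprime.sub_one_sub_two x).mul_dvd (Int.modEq_iff_dvd.1 h₁) (Int.modEq_iff_dvd.1 h₂)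

/-- The values at `x = 1` and `x = 2` are `1` and `-2^k`, for both sides. -/
lemma neg_two_mul_pow_succ_add_three_mul_pow_modEq (x : ℤ) (k : ℕ) :
    -2 * x ^ (k + 1) + 3 * x ^ k ≡ x * (x - (2 ^ k + 4)) + (2 ^ k + 4)
      [ZMOD (x - 1) * (x - 2)] := by
  refine Int.modEq_sub_one_mul_sub_two ?_ ?_
  · have hx : x ≡ 1 [ZMOD x - 1] := Int.modEq_sub x 1
    calc -2 * x ^ (k + 1) + 3 * x ^ k
        ≡ -2 * 1 ^ (k + 1) + 3 * 1 ^ k [ZMOD x - 1] := by gcongr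
      _ = 1 * (1 - (2 ^ k + 4)) + (2 ^ k + 4) := by ring
      _ ≡ x * (x - (2 ^ k + 4)) + (2 ^ k + 4) [ZMOD x - 1] := by gcongr
  · have hx : x ≡ 2 [ZMOD x - 2] := Int.modEq_sub x 2
    calc -2 * x ^ (k + 1) + 3 * x ^ k
        ≡ -2 * 2 ^ (k + 1) + 3 * 2 ^ k [ZMOD x - 2] := by gcongr
      _ = 2 * (2 - (2 ^ k + 4)) + (2 ^ k + 4) := by ring
      _ ≡ x * (x - (2 ^ k + 4)) + (2 ^ k + 4) [ZMOD x - 2] := by gcongr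

lemma emod_sub_one_mul_sub_two_eq {x c : ℤ} (hc : 4 ≤ c) (hcx : c < x) :
    (x * (x - c) + c) % ((x - 1) * (x - 2)) = x * (x - c) + c := by
  refine Int.emod_eq_of_lt (by nlinarith) ?_
  nlinarith

lemma two_pow_succ_add_four_lt_nine_pow {n : ℕ} (hn : 1 ≤ n) : (2 : ℤ) ^ (n + 1) + 4 < 9 ^ n := by
  obtain ⟨m, rfl⟩ := Nat.exists_eq_add_of_le' hn
  have h₁ : (1 : ℤ) ≤ 2 ^ m := one_le_pow₀ (by norm_num)
  have h₂ : (2 : ℤ) ^ m ≤ 9 ^ m := pow_le_pow_left₀ (by norm_num) (by norm_num) m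
  rw [pow_succ, pow_succ, pow_succ]
  linarith

theorem stmt_18 (n : ℕ) (hn : 1 ≤ n) :
    ((-2 * (9 : ℤ) ^ (n ^ 2 + 2 * n) + 3 * 9 ^ (n ^ 2 + n)) %
        ((9 : ℤ) ^ (2 * n) - 3 * 9 ^ n + 2)) % (9 : ℤ) ^ n
      = 2 ^ (n + 1) + 4 := by
  set x : ℤ := 9 ^ n
  set c : ℤ := 2 ^ (n + 1) + 4
  have hcx : c < x := two_pow_succ_add_four_lt_nine_pow hn
  have hc : 4 ≤ c := le_add_of_nonneg_left (by positivity)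
  have hA : -2 * (9 : ℤ) ^ (n ^ 2 + 2 * n) + 3 * 9 ^ (n ^ 2 + n)
      = -2 * x ^ (n + 1 + 1) + 3 * x ^ (n + 1) := by
    simp only [x, ← pow_mul]; ring_nf
  have hM : (9 : ℤ) ^ (2 * n) - 3 * 9 ^ n + 2 = (x - 1) * (x - 2) := by
    simp only [x]; ring_nf
  rw [hA, hM, (neg_two_mul_pow_succ_add_three_mul_pow_modEq x (n + 1)).eq,
    emod_sub_one_mul_sub_two_eq hc hcx, add_comm, Int.add_mul_emod_self_left,
    Int.emod_eq_of_lt (by omega) hcx]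
end

section
/- For every integer n ≥ 1, the n-th Tribonacci number satisfies T(n) = (2^(n²+n) mod (2^(3n) − 2^(2n) − 2^n − 1)) mod 2^n. -/
/-!
Put `x = 2^n`. Modulo `x³ - x² - x - 1` one has `x³ ≡ x² + x + 1`, which is the Tribonacci
recurrence, so `x^(m+2) ≡ T(m+2)·x² + (T(m+1) + T(m))·x + T(m+1)` for every `m`; for
`m = n - 1` the left side is `2^(n²+n)`. Since `4·T(k) ≤ 2^k`, the coefficients on the right
are small compared with `x`, so the right side already lies in `[0, x³ - x² - x - 1)`, and its
remainder modulo `x` is its constant term `T(n)`.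
-/

/-- The Tribonacci numbers: `T(0) = 0`, `T(1) = 0`, `T(2) = 1`,
`T(n+3) = T(n+2) + T(n+1) + T(n)`. -/
def tribonacci : ℕ → ℤ
  | 0 => 0
  | 1 => 0
  | 2 => 1
  | n + 3 => tribonacci (n + 2) + tribonacci (n + 1) + tribonacci n

theorem tribonacci_add_three (n : ℕ) :
    tribonacci (n + 3) = tribonacci (n + 2) + tribonacci (n + 1) + tribonacci n := rfl

theorem tribonacci_nonneg (n : ℕ) : 0 ≤ tribonacci n := by
  induction n using Nat.strong_induction_on with
  | _ n ih =>
    match n with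
    | 0 | 1 | 2 => decide
    | k + 3 =>
      rw [tribonacci_add_three]
      linarith [ih k (by omega), ih (k + 1) (by omega), ih (k + 2) (by omega)]

theorem four_mul_tribonacci_le (n : ℕ) : 4 * tribonacci n ≤ 2 ^ n := by
  induction n using Nat.strong_induction_on with
  | _ n ih =>
    match n with
    | 0 | 1 | 2 => decide
    | k + 3 =>
      rw [tribonacci_add_three]
      have h₀ := ih k (by omega)
      have h₁ := ih (k + 1) (by omega)
      have h₂ := ih (k + 2) (by omega)
      have : (0 : ℤ) ≤ 2 ^ k := by positivity
      linear_combination h₀ + h₁ + h₂ + this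

theorem dvd_pow_sub_tribonacci {R : Type*} [CommRing R] (x : R) (m : ℕ) :
    x ^ 3 - x ^ 2 - x - 1 ∣ x ^ (m + 2) -
      (tribonacci (m + 2) * x ^ 2 + (tribonacci (m + 1) + tribonacci m) * x + tribonacci (m + 1)) := by
  induction m with
  | zero => simp [tribonacci]
  | succ m ih =>
    obtain ⟨q, hq⟩ := ih
    refine ⟨x * q + tribonacci (m + 2), ?_⟩
    rw [tribonacci_add_three]
    push_cast
    linear_combination x * hq

theorem quadratic_emod_cubic {x a b c : ℤ} (hx : 8 ≤ x) (ha₀ : 0 ≤ a) (ha : 2 * a ≤ x)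
    (hb₀ : 0 ≤ b) (hb : b ≤ x) (hc₀ : 0 ≤ c) (hc : c < x) :
    (a * x ^ 2 + b * x + c) % (x ^ 3 - x ^ 2 - x - 1) = a * x ^ 2 + b * x + c := by
  apply Int.emod_eq_of_lt (by positivity)
  nlinarith [mul_le_mul_of_nonneg_right ha (by positivity : (0 : ℤ) ≤ x ^ 2),
    mul_le_mul_of_nonneg_right hb (by positivity : (0 : ℤ) ≤ x),
    mul_le_mul_of_nonneg_right hx (by positivity : (0 : ℤ) ≤ x ^ 2)]

theorem quadratic_emod_self {x a b c : ℤ} (hc₀ : 0 ≤ c) (hc : c < x) :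
    (a * x ^ 2 + b * x + c) % x = c := by
  rw [show a * x ^ 2 + b * x + c = c + (a * x + b) * x by ring, Int.add_mul_emod_self_right,
    Int.emod_eq_of_lt hc₀ hc]

theorem stmt_19_general (n : ℕ) :
    tribonacci n =
      ((2 : ℤ) ^ (n ^ 2 + n) % ((2 : ℤ) ^ (3 * n) - 2 ^ (2 * n) - 2 ^ n - 1)) % (2 : ℤ) ^ n := by
  match n with
  | 0 | 1 | 2 => rfl
  | k + 3 =>
  set x : ℤ := 2 ^ (k + 3) with hx
  have hpow : (2 : ℤ) ^ ((k + 3) ^ 2 + (k + 3)) = x ^ (k + 2 + 2) := by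
    rw [← pow_mul]; ring_nf
  have hmod : (2 : ℤ) ^ (3 * (k + 3)) - 2 ^ (2 * (k + 3)) - 2 ^ (k + 3) - 1 =
      x ^ 3 - x ^ 2 - x - 1 := by
    simp only [x, ← pow_mul, mul_comm]
  have hcong := (Int.modEq_iff_dvd.mpr (dvd_pow_sub_tribonacci x (k + 2))).symm
  simp only [Int.cast_id] at hcong
  have h₂ := four_mul_tribonacci_le (k + 2)
  have h₃ := four_mul_tribonacci_le (k + 2 + 1)
  have h₄ := four_mul_tribonacci_le (k + 2 + 2)
  have hk : (1 : ℤ) ≤ 2 ^ k := one_le_pow₀ one_le_two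
  simp only [pow_succ] at hx h₂ h₃ h₄
  have hx₈ : 8 ≤ x := by linarith
  have ha : 2 * tribonacci (k + 2 + 2) ≤ x := by linarith
  have hb : tribonacci (k + 2 + 1) + tribonacci (k + 2) ≤ x := by linarith
  have hc : tribonacci (k + 2 + 1) < x := by linarith
  rw [hpow, hmod, hcong,
    quadratic_emod_cubic hx₈ (tribonacci_nonneg _) ha
      (add_nonneg (tribonacci_nonneg _) (tribonacci_nonneg _)) hb (tribonacci_nonneg _) hc,
    quadratic_emod_self (tribonacci_nonneg _) hc]

theorem stmt_19 (n : ℕ) (hn : 1 ≤ n) :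
    tribonacci n =
      ((2 : ℤ) ^ (n ^ 2 + n) % ((2 : ℤ) ^ (3 * n) - 2 ^ (2 * n) - 2 ^ n - 1)) % (2 : ℤ) ^ n :=
  stmt_19_general n
end
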